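/- The set of numbers of the form π√(q²−p²) with 0 < p < q coprime and both odd, together with 2π and the numbers 2π√(q²−p²) with 0 < p < q coprime of opposite parity, equals {2π√n : n ∈ ℕ, n ≥ 1}. -/
import Mathlib


open Real

lemma sqrt_four_mul (n : ℕ) : Real.sqrt ((4 * n : ℕ) : ℝ) = 2 * Real.sqrt n := by
  push_cast
  rw [show (4 : ℝ) * n = 2 ^ 2 * n by ring, Real.sqrt_mul (by positivity),
    Real.sqrt_sq (by norm_num)]

theorem stmt7 :
    ({x : ℝ | ∃ p q : ℕ, 0 < p ∧ p < q ∧ Nat.gcd p q = 1 ∧ Odd p ∧ Odd q ∧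
        x = π * Real.sqrt ((q : ℝ) ^ 2 - (p : ℝ) ^ 2)} ∪
      {2 * π} ∪
      {x : ℝ | ∃ p q : ℕ, 0 < p ∧ p < q ∧ Nat.gcd p q = 1 ∧ (Odd p ↔ ¬ Odd q) ∧
        x = 2 * π * Real.sqrt ((q : ℝ) ^ 2 - (p : ℝ) ^ 2)}) =
    {x : ℝ | ∃ n : ℕ, 1 ≤ n ∧ x = 2 * π * Real.sqrt (n : ℝ)} := by
  ext x
  simp only [Set.mem_union, Set.mem_setOf_eq, Set.mem_singleton_iff]
  constructor
  · rintro ((⟨p, q, hp, hpq, hg, ⟨a, rfl⟩, ⟨b, rfl⟩, rfl⟩ | rfl) | ⟨p, q, hp, hpq, hg, hpar, rfl⟩)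
    · -- both odd
      have hab : a < b := by omega
      have hlt : a * (a + 1) < b * (b + 1) := by nlinarith
      refine ⟨b * (b + 1) - a * (a + 1), by omega, ?_⟩
      have hkey : ((2 * b + 1 : ℕ) : ℝ) ^ 2 - ((2 * a + 1 : ℕ) : ℝ) ^ 2 =
          ((4 * (b * (b + 1) - a * (a + 1)) : ℕ) : ℝ) := by
        push_cast [Nat.cast_sub hlt.le]
        ring
      rw [hkey, sqrt_four_mul]
      ring
    · exact ⟨1, le_refl 1, by simp⟩
    · have hlt : p ^ 2 < q ^ 2 := by nlinarith
      refine ⟨q ^ 2 - p ^ 2, by omega, ?_⟩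
      have : ((q : ℝ)) ^ 2 - (p : ℝ) ^ 2 = ((q ^ 2 - p ^ 2 : ℕ) : ℝ) := by
        push_cast [Nat.cast_sub hlt.le]
        ring
      rw [this]
  · rintro ⟨n, hn, rfl⟩
    rcases eq_or_lt_of_le hn with h1 | h2
    · left; right
      simp [← h1]
    · rcases Nat.even_or_odd n with he | ho
      · -- n even, n ≥ 2 : use p = n - 1, q = n + 1, both odd
        left; left
        refine ⟨n - 1, n + 1, by omega, by omega, ?_, ?_, ?_, ?_⟩
        · have hd : Nat.gcd (n - 1) (n + 1) ∣ 2 := by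
            have := Nat.dvd_sub (Nat.gcd_dvd_right (n - 1) (n + 1))
              (Nat.gcd_dvd_left (n - 1) (n + 1))
            simpa [show n + 1 - (n - 1) = 2 by omega] using this
          have hodd : ¬ (2 ∣ n - 1) := by
            rcases he with ⟨k, hk⟩; omega
          rcases (Nat.dvd_prime Nat.prime_two).mp hd with h | h
          · exact h
          · exact absurd (h ▸ Nat.gcd_dvd_left (n - 1) (n + 1)) hodd
        · rcases he with ⟨k, hk⟩; exact ⟨k - 1, by omega⟩
        · rcases he with ⟨k, hk⟩; exact ⟨k, by omega⟩
        · have hkey : ((n + 1 : ℕ) : ℝ) ^ 2 - ((n - 1 : ℕ) : ℝ) ^ 2 = ((4 * n : ℕ) : ℝ) := by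
            push_cast [Nat.cast_sub (by omega : 1 ≤ n)]
            ring
          rw [hkey, sqrt_four_mul]
          ring
      · -- n odd, n ≥ 3 : use p = (n-1)/2, q = (n+1)/2
        obtain ⟨k, rfl⟩ := ho
        right
        refine ⟨k, k + 1, by omega, by omega, (by rw [show k + 1 = 1 + k by ring, Nat.gcd_add_self_right, Nat.gcd_one_right]), ?_, ?_⟩
        · constructor
          · rintro ⟨a, rfl⟩ ⟨b, hb⟩; omega
          · intro h
            rcases Nat.even_or_odd k with ⟨a, ha⟩ | hk
            · exact absurd ⟨a, by omega⟩ h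
            · exact hk
        · congr 1
          push_cast
          ring
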